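/- arXiv:1608.02282 — 6 statements merged into one kernel-verified Lean document; each statement's English description precedes it below -/
import Mathlib

section
/- Let G = (V,E) be a graph, p ∈ ℂ^V, S ⊆ V, u ∈ S, and let (v_1,...,v_k) be an ordering of the neighbors of u in S. Define child subproblems C(S,u) = {(S\{u}, v_1), (S\{u,v_1}, v_2), ..., (S\{u,v_1,...,v_{k-1}}, v_k)}. Then r_{S,u} = p_u · ∏_{(S',u') ∈ C(S,u)} 1/(1 - r_{S',u'}), assuming all relevant q̆ values are nonzero. -/
/-!
Deleting `u` from `S` splits the independent sets of `S` into those avoiding `u` and those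
containing it; the latter are `insert u I` with `I` independent in `S \ Γ⁺(u)`, which gives
`q̆_S = q̆_{S \ u} - p_u q̆_{S \ Γ⁺(u)}`, i.e. `r_{S,u} = p_u q̆_{S \ Γ⁺(u)} / q̆_{S \ u}`.
Each factor `(1 - r_{S',u'})⁻¹` of the product is `q̆_{S'} / q̆_{S' \ u'}`, and along the
chain `S \ u ⊇ S \ {u, v₁} ⊇ ⋯ ⊇ S \ Γ⁺(u)` these ratios telescope to `q̆_{S \ Γ⁺(u)} / q̆_{S \ u}`.
-/

open Finset

/-- alternating-sign independence polynomial over ℂ -/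
noncomputable def qbar {V : Type*} [DecidableEq V] (G : SimpleGraph V) [DecidableRel G.Adj]
    (p : V → ℂ) (S : Finset V) : ℂ :=
  ∑ I ∈ S.powerset.filter (fun I => ∀ u ∈ I, ∀ v ∈ I, ¬ G.Adj u v),
    (-1 : ℂ) ^ I.card * ∏ v ∈ I, p v

/-- occupation ratio `r_{S,u} = 1 - q̆_S / q̆_{S \ {u}}` -/
noncomputable def occ {V : Type*} [DecidableEq V] (G : SimpleGraph V) [DecidableRel G.Adj]
    (p : V → ℂ) (S : Finset V) (u : V) : ℂ :=
  1 - qbar G p S / qbar G p (S.erase u)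

lemma prod_range_div_of_ne_zero {K : Type*} [CommGroupWithZero K] (f : ℕ → K)
    (hf : ∀ i, f i ≠ 0) (n : ℕ) :
    ∏ i ∈ range n, f (i + 1) / f i = f n / f 0 := by
  simpa using congrArg Units.val (prod_range_div (fun i ↦ Units.mk0 (f i) (hf i)) n)

lemma erase_sdiff_toFinset_take {α : Type*} [DecidableEq α] (A : Finset α) (l : List α)
    (i : ℕ) (hi : i < l.length) :
    (A \ (l.take i).toFinset).erase l[i] = A \ (l.take (i + 1)).toFinset := by
  ext v
  simp only [List.take_add_one, List.getElem?_eq_getElem hi, Option.toList_some,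
    List.toFinset_append, mem_erase, mem_sdiff, mem_union, List.mem_toFinset, List.mem_singleton]
  tauto

section IndependenceSum

variable {V : Type*} [DecidableEq V] (G : SimpleGraph V) [DecidableRel G.Adj] (p : V → ℂ)

noncomputable def indepWeight (I : Finset V) : ℂ :=
  if ∀ a ∈ I, ∀ b ∈ I, ¬ G.Adj a b then (-1 : ℂ) ^ I.card * ∏ v ∈ I, p v else 0

lemma qbar_eq_sum_powerset_indepWeight (S : Finset V) :
    qbar G p S = ∑ I ∈ S.powerset, indepWeight G p I := by
  rw [qbar, sum_filter]
  rfl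

variable {G} in
lemma indepWeight_insert_of_adj {u v : V} {t : Finset V} (huv : G.Adj u v) (hv : v ∈ t) :
    indepWeight G p (insert u t) = 0 :=
  if_neg fun hind ↦ hind u (mem_insert_self u t) v (mem_insert_of_mem hv) huv

variable {G} in
lemma indepWeight_insert {u : V} {t : Finset V} (hu : u ∉ t) (hadj : ∀ v ∈ t, ¬ G.Adj u v) :
    indepWeight G p (insert u t) = -p u * indepWeight G p t := by
  have hind : (∀ a ∈ insert u t, ∀ b ∈ insert u t, ¬ G.Adj a b) ↔
      ∀ a ∈ t, ∀ b ∈ t, ¬ G.Adj a b := by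
    simp only [forall_mem_insert, G.irrefl, not_false_eq_true, true_and]
    exact ⟨fun h a ha ↦ (h.2 a ha).2,
      fun h ↦ ⟨hadj, fun a ha ↦ ⟨fun hau ↦ hadj a ha hau.symm, h a ha⟩⟩⟩
  simp only [indepWeight, hind, card_insert_of_notMem hu, prod_insert hu, pow_succ]
  split_ifs <;> ring

lemma inv_one_sub_occ (T : Finset V) (v : V) :
    (1 - occ G p T v)⁻¹ = qbar G p (T.erase v) / qbar G p T := by
  rw [occ, sub_sub_cancel, inv_div]

end IndependenceSum

section Recurrence

variable {V : Type*} [Fintype V] [DecidableEq V] (G : SimpleGraph V) [DecidableRel G.Adj]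
  (p : V → ℂ)

lemma qbar_eq_qbar_erase_sub {S : Finset V} {u : V} (hu : u ∈ S) :
    qbar G p S = qbar G p (S.erase u) - p u * qbar G p (S.erase u \ G.neighborFinset u) := by
  have h_adj : ∀ t ∈ (S.erase u).powerset, t ∉ (S.erase u \ G.neighborFinset u).powerset →
      indepWeight G p (insert u t) = 0 := by
    intro t ht hnt
    simp only [mem_powerset] at ht hnt
    obtain ⟨v, hvt, hvN⟩ : ∃ v ∈ t, v ∈ G.neighborFinset u := by
      by_contra! hc
      exact hnt fun x hx ↦ mem_sdiff.2 ⟨ht hx, hc x hx⟩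
    exact indepWeight_insert_of_adj p ((G.mem_neighborFinset u v).1 hvN) hvt
  have h_nonadj : ∀ t ∈ (S.erase u \ G.neighborFinset u).powerset,
      indepWeight G p (insert u t) = -p u * indepWeight G p t := by
    intro t ht
    rw [mem_powerset] at ht
    refine indepWeight_insert p (fun h ↦ notMem_erase u S (mem_sdiff.1 (ht h)).1) ?_
    exact fun v hv huv ↦ (mem_sdiff.1 (ht hv)).2 ((G.mem_neighborFinset u v).2 huv)
  simp only [qbar_eq_sum_powerset_indepWeight]
  conv_lhs => rw [← insert_erase hu]
  rw [sum_powerset_insert (notMem_erase u S), ← sum_subset (powerset_mono.2 sdiff_subset) h_adj,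
    sum_congr rfl h_nonadj, ← mul_sum]
  ring

lemma occ_eq_mul_qbar_div {S : Finset V} {u : V} (hu : u ∈ S)
    (hne : qbar G p (S.erase u) ≠ 0) :
    occ G p S u = p u * (qbar G p (S.erase u \ G.neighborFinset u) / qbar G p (S.erase u)) := by
  rw [occ, qbar_eq_qbar_erase_sub G p hu]
  field_simp
  ring

end Recurrence

theorem stmt1_general {V : Type*} [Fintype V] [DecidableEq V] (G : SimpleGraph V) [DecidableRel G.Adj]
    (p : V → ℂ) (S : Finset V) (u : V) (hu : u ∈ S)
    (l : List V) (hl : l.toFinset = S ∩ G.neighborFinset u)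
    (hne : ∀ T ⊆ S, qbar G p T ≠ 0) :
    occ G p S u
      = p u * ∏ i : Fin l.length,
          (1 - occ G p ((S.erase u) \ (l.take i).toFinset) (l.get i))⁻¹ := by
  set T : ℕ → Finset V := fun i ↦ S.erase u \ (l.take i).toFinset
  have hT : ∀ i, qbar G p (T i) ≠ 0 := fun i ↦ hne _ (sdiff_subset.trans (erase_subset u S))
  have h_factor : ∀ i : Fin l.length,
      (1 - occ G p (T i) (l.get i))⁻¹ = qbar G p (T (i + 1)) / qbar G p (T i) := fun i ↦ by
    rw [inv_one_sub_occ, List.get_eq_getElem, erase_sdiff_toFinset_take _ _ _ i.isLt]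
  have h_last : T l.length = S.erase u \ G.neighborFinset u := by
    ext v
    simp only [T, List.take_length, hl, mem_sdiff, mem_erase, mem_inter]
    tauto
  rw [Fintype.prod_congr _ _ h_factor,
    Fin.prod_univ_eq_prod_range (fun i ↦ qbar G p (T (i + 1)) / qbar G p (T i)),
    prod_range_div_of_ne_zero _ hT, h_last]
  have h_first : T 0 = S.erase u := by simp [T]
  rw [h_first, occ_eq_mul_qbar_div G p hu (hne _ (erase_subset u S))]

/-- the computational recurrence.  If `l = (v_1, …, v_k)` is an ordering of
the neighbours of `u` inside `S`, and the child subproblems are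
`(S \ {u, v_1, …, v_{i-1}}, v_i)`, then
`r_{S,u} = p_u · ∏_{(S',u') ∈ C(S,u)} (1 - r_{S',u'})⁻¹`
(assuming all the relevant alternating-sign independence polynomials on subsets of `S`
are nonzero). -/
theorem stmt1 {V : Type*} [Fintype V] [DecidableEq V] (G : SimpleGraph V) [DecidableRel G.Adj]
    (p : V → ℂ) (S : Finset V) (u : V) (hu : u ∈ S)
    (l : List V) (hnodup : l.Nodup) (hl : l.toFinset = S ∩ G.neighborFinset u)
    (hne : ∀ T ⊆ S, qbar G p T ≠ 0) :
    occ G p S u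
      = p u * ∏ i : Fin l.length,
          (1 - occ G p ((S.erase u) \ (l.take i).toFinset) (l.get i))⁻¹ :=
  stmt1_general G p S u hu l hl hne
end

section
/- Let G = (V,E) be a graph and p ∈ (0,1)^V be in the Shearer region (i.e., q̆_S(p) > 0 for all S ⊆ V). Then for any subsets A ⊆ B ⊆ V, q̆_A(p) ≥ q̆_B(p) > 0. -/
open Finset

/-- alternating-sign independence polynomial over ℝ -/
def qbarR {V : Type*} [DecidableEq V] (G : SimpleGraph V) [DecidableRel G.Adj]
    (p : V → ℝ) (S : Finset V) : ℝ :=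
  ∑ I ∈ S.powerset.filter (fun I => ∀ u ∈ I, ∀ v ∈ I, ¬ G.Adj u v),
    (-1 : ℝ) ^ I.card * ∏ v ∈ I, p v

lemma qbar_eq {V : Type*} [DecidableEq V] (G : SimpleGraph V) [DecidableRel G.Adj]
    (p : V → ℝ) (S : Finset V) :
    qbarR G p S = ∑ I ∈ S.powerset,
      if (∀ u ∈ I, ∀ v ∈ I, ¬ G.Adj u v) then (-1 : ℝ) ^ I.card * ∏ v ∈ I, p v else 0 :=
  Finset.sum_filter _ _

lemma qbar_insert {V : Type*} [DecidableEq V] (G : SimpleGraph V) [DecidableRel G.Adj]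
    (p : V → ℝ) {v : V} {S : Finset V} (hv : v ∉ S) :
    qbarR G p (insert v S) =
      qbarR G p S - p v * qbarR G p (S.filter fun u => ¬ G.Adj v u) := by
  rw [qbar_eq, qbar_eq, qbar_eq, Finset.sum_powerset_insert hv]
  have key : ∑ I ∈ S.powerset,
      (if (∀ u ∈ insert v I, ∀ w ∈ insert v I, ¬ G.Adj u w)
        then (-1 : ℝ) ^ (insert v I).card * ∏ x ∈ insert v I, p x else 0)
      = - (p v * ∑ I ∈ (S.filter fun u => ¬ G.Adj v u).powerset,
          (if (∀ u ∈ I, ∀ w ∈ I, ¬ G.Adj u w)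
            then (-1 : ℝ) ^ I.card * ∏ x ∈ I, p x else 0)) := by
    rw [← Finset.sum_subset (Finset.powerset_mono.2 (Finset.filter_subset _ S))
      (by
        intro I hI hI'
        simp only [Finset.mem_powerset] at hI hI'
        have : ∃ u ∈ I, G.Adj v u := by
          by_contra h
          push_neg at h
          exact hI' fun x hx => Finset.mem_filter.2 ⟨hI hx, h x hx⟩
        obtain ⟨u, huI, hadj⟩ := this
        rw [if_neg]
        intro hind
        exact hind v (Finset.mem_insert_self _ _) u (Finset.mem_insert_of_mem huI) hadj)]
    rw [Finset.mul_sum, ← Finset.sum_neg_distrib]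
    apply Finset.sum_congr rfl
    intro I hI
    simp only [Finset.mem_powerset] at hI
    have hvI : v ∉ I := fun h => hv (Finset.filter_subset _ _ (hI h))
    have hiff : (∀ u ∈ insert v I, ∀ w ∈ insert v I, ¬ G.Adj u w) ↔
        (∀ u ∈ I, ∀ w ∈ I, ¬ G.Adj u w) := by
      constructor
      · intro h u hu w hw
        exact h u (Finset.mem_insert_of_mem hu) w (Finset.mem_insert_of_mem hw)
      · intro h u hu w hw
        simp only [Finset.mem_insert] at hu hw
        rcases hu with rfl | hu <;> rcases hw with rfl | hw
        · exact G.irrefl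
        · exact (Finset.mem_filter.1 (hI hw)).2
        · exact fun hadj => (Finset.mem_filter.1 (hI hu)).2 hadj.symm
        · exact h u hu w hw
    rw [Finset.card_insert_of_notMem hvI, Finset.prod_insert hvI]
    by_cases hind : ∀ u ∈ I, ∀ w ∈ I, ¬ G.Adj u w
    · rw [if_pos (hiff.2 hind), if_pos hind]
      ring
    · rw [if_neg (fun h => hind (hiff.1 h)), if_neg hind]
      ring
  rw [key]; ring

/-- monotonicity and positivity of `q̆`: if `p ∈ (0,1)^V` lies in the
Shearer region (i.e. `q̆_S(p) > 0` for all `S ⊆ V`), then for `A ⊆ B ⊆ V` we have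
`q̆_A(p) ≥ q̆_B(p) > 0`. -/
theorem stmt3 {V : Type*} [Fintype V] [DecidableEq V] (G : SimpleGraph V) [DecidableRel G.Adj]
    (p : V → ℝ) (hp : ∀ v, 0 < p v ∧ p v < 1)
    (hShearer : ∀ S : Finset V, 0 < qbarR G p S)
    (A B : Finset V) (hAB : A ⊆ B) :
    qbarR G p B ≤ qbarR G p A ∧ 0 < qbarR G p B := by
  refine ⟨?_, hShearer B⟩
  have main : ∀ s : Finset V, qbarR G p (A ∪ s) ≤ qbarR G p A := by
    intro s
    induction s using Finset.induction_on with
    | empty => simp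
    | @insert v s hvs ih =>
      rw [Finset.union_insert]
      by_cases hvAs : v ∈ A ∪ s
      · rwa [Finset.insert_eq_self.2 hvAs]
      · rw [qbar_insert G p hvAs]
        have h1 := (hp v).1
        have h2 := hShearer ((A ∪ s).filter fun u => ¬ G.Adj v u)
        nlinarith
  have := main (B \ A)
  rwa [Finset.union_sdiff_of_subset hAB] at this
end

section
/- Let (x_i)_{i=1}^n and (y_i)_{i=1}^n be complex numbers with each y_i ≠ 0, and suppose |x_i/y_i - 1| ≤ ε for all i, where ε ≤ 1/n. Then |∏_{i=1}^n x_i - ∏_{i=1}^n y_i| ≤ 2nε · ∏_{i=1}^n |y_i|. -/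
/-!
Writing `x i = (1 + δ i) * y i` with `δ i = x i / y i - 1`, the difference of the products is
`(∏ (1 + δ i) - 1) * ∏ y i`, and `‖∏ (1 + δ i) - 1‖ ≤ exp (∑ ‖δ i‖) - 1`. Since
`∑ ‖δ i‖ ≤ n ε ≤ 1`, the bound `exp t - 1 ≤ 2 t` on `[0, 1]` gives the factor `2 n ε`.
-/

open Finset

theorem Finset.norm_prod_sub_prod_le_exp_sub_one {ι 𝕜 : Type*} [NormedField 𝕜] (s : Finset ι)
    {x y : ι → 𝕜} (hy : ∀ i ∈ s, y i ≠ 0) :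
    ‖∏ i ∈ s, x i - ∏ i ∈ s, y i‖ ≤
      (Real.exp (∑ i ∈ s, ‖x i / y i - 1‖) - 1) * ∏ i ∈ s, ‖y i‖ := by
  have hfactor : ∏ i ∈ s, x i - ∏ i ∈ s, y i =
      (∏ i ∈ s, (1 + (x i / y i - 1)) - 1) * ∏ i ∈ s, y i := by
    rw [sub_one_mul, ← prod_mul_distrib]
    congr 1
    exact prod_congr rfl fun i hi ↦ by rw [add_sub_cancel, div_mul_cancel₀ _ (hy i hi)]
  rw [hfactor, norm_mul, norm_prod]
  gcongr
  exact s.norm_prod_one_add_sub_one_le _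

theorem Real.exp_sub_one_le_two_mul {t : ℝ} (ht₀ : 0 ≤ t) (ht₁ : t ≤ 1) :
    Real.exp t - 1 ≤ 2 * t := by
  simpa [abs_of_nonneg ht₀] using
    (le_abs_self _).trans (Real.abs_exp_sub_one_le (abs_le.2 ⟨by linarith, ht₁⟩))

theorem stmt6_general (n : ℕ) (ε : ℝ) (hnε : (n : ℝ) * ε ≤ 1)
    (x y : Fin n → ℂ) (hy : ∀ i, y i ≠ 0)
    (h : ∀ i, ‖x i / y i - 1‖ ≤ ε) :
    ‖∏ i, x i - ∏ i, y i‖ ≤ 2 * n * ε * ∏ i, ‖y i‖ := by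
  set t := ∑ i, ‖x i / y i - 1‖
  have ht : t ≤ n * ε := by
    simpa using sum_le_card_nsmul univ _ ε fun i _ ↦ h i
  have ht₀ : 0 ≤ t := sum_nonneg fun i _ ↦ norm_nonneg _
  calc ‖∏ i, x i - ∏ i, y i‖ ≤ (Real.exp t - 1) * ∏ i, ‖y i‖ :=
        univ.norm_prod_sub_prod_le_exp_sub_one fun i _ ↦ hy i
    _ ≤ 2 * n * ε * ∏ i, ‖y i‖ := by
        gcongr
        linarith [Real.exp_sub_one_le_two_mul ht₀ (ht.trans hnε)]

/-- if `y_i ≠ 0`, `|x_i/y_i - 1| ≤ ε` for all `i`, with `n ≥ 1` and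
`nε ≤ 1`, then `|∏ x_i - ∏ y_i| ≤ 2nε ∏ |y_i|`. -/
theorem stmt6 (n : ℕ) (hn : 1 ≤ n) (ε : ℝ) (hε : 0 < ε) (hnε : (n : ℝ) * ε ≤ 1)
    (x y : Fin n → ℂ) (hy : ∀ i, y i ≠ 0)
    (h : ∀ i, ‖x i / y i - 1‖ ≤ ε) :
    ‖∏ i, x i - ∏ i, y i‖ ≤ 2 * n * ε * ∏ i, ‖y i‖ :=
  stmt6_general n ε hnε x y hy h
end

section
/- Let p ∈ S (the Shearer region for G), and let t_0 > 0 be such that (1+t)p ∈ S for all t ∈ [0, t_0]. Then for every node (S,u), the map t ↦ ϱ_{S,u}((1+t)p) is non-decreasing and convex on [0, t_0]; equivalently its derivative β_{S,u}(p,t) is non-negative and non-decreasing in t. -/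
/-!
Expanding `qbarR` at `u` gives `ϱ_{S,u} = p_u · q̄(S ∖ u ∖ N(u)) / q̄(S ∖ u)`, and for a neighbour
`w ∈ S` of `u` this turns into the recurrence `ϱ_{S,u} = ϱ_{S∖w,u} · (1 - ϱ_{S∖u,w})⁻¹`, with
`ϱ_{S,u} = p_u` when `u` has no neighbour in `S`. Nonnegative, nondecreasing convex functions of `t`
are closed under products and under `g ↦ (1 - g)⁻¹` (for `g < 1`), and the weights
`(1 + t)‖p_v‖` are of this kind, so induction on `|S|` along the recurrence proves the claim.
-/

open Finset

/-- real occupation ratio -/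
noncomputable def occR {V : Type*} [DecidableEq V] (G : SimpleGraph V) [DecidableRel G.Adj]
    (p : V → ℝ) (S : Finset V) (u : V) : ℝ :=
  1 - qbarR G p S / qbarR G p (S.erase u)

/-- A variant of `ConvexOn.comp` that does not need the image `f '' s` to be convex. -/
theorem ConvexOn.comp_of_mapsTo {𝕜 E β : Type*} [Semiring 𝕜] [PartialOrder 𝕜]
    [AddCommMonoid E] [Module 𝕜 E] [AddCommMonoid β] [PartialOrder β] [SMul 𝕜 β]
    {s : Set E} {t : Set β} {f : E → β} {g : β → β}
    (hg : ConvexOn 𝕜 t g) (hf : ConvexOn 𝕜 s f) (hg' : MonotoneOn g t) (hst : Set.MapsTo f s t) :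
    ConvexOn 𝕜 s (g ∘ f) :=
  ⟨hf.1, fun _ hx _ hy _ _ ha hb hab =>
    (hg' (hst <| hf.1 hx hy ha hb hab) (hg.1 (hst hx) (hst hy) ha hb hab) <|
      hf.2 hx hy ha hb hab).trans <| hg.2 (hst hx) (hst hy) ha hb hab⟩

theorem monotoneOn_inv_one_sub : MonotoneOn (fun x : ℝ => (1 - x)⁻¹) (Set.Iio 1) :=
  fun _ _ _ hy hxy => inv_anti₀ (sub_pos.2 hy) (sub_le_sub_left hxy 1)

theorem convexOn_inv_one_sub : ConvexOn ℝ (Set.Iio 1) fun x : ℝ => (1 - x)⁻¹ := by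
  refine ⟨convex_Iio 1, fun x hx y hy a b ha hb hab => ?_⟩
  have h := (convexOn_zpow (-1 : ℤ)).2 (Set.mem_Ioi.2 (sub_pos.2 hx))
    (Set.mem_Ioi.2 (sub_pos.2 hy)) ha hb hab
  simp only [smul_eq_mul, zpow_neg, zpow_one] at h ⊢
  rwa [show 1 - (a * x + b * y) = a * (1 - x) + b * (1 - y) by linear_combination -hab]

section

variable {V : Type*} [DecidableEq V] (G : SimpleGraph V) [DecidableRel G.Adj]

theorem qbarR_insert (p : V → ℝ) {s : Finset V} {u : V} (hu : u ∉ s) :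
    qbarR G p (insert u s) = qbarR G p s - p u * qbarR G p {v ∈ s | ¬ G.Adj u v} := by
  simp only [qbarR, sum_filter]
  rw [sum_powerset_insert hu, sub_eq_add_neg, mul_sum, ← sum_neg_distrib]
  congr 1
  rw [← sum_subset (powerset_mono.2 (filter_subset (fun v => ¬ G.Adj u v) s))]
  · refine sum_congr rfl fun I hI => ?_
    have huI : u ∉ I := fun h => hu (mem_powerset.1 hI |>.trans (filter_subset _ s) h)
    have hadj : ∀ v ∈ I, ¬ G.Adj u v := fun v hv => (mem_filter.1 (mem_powerset.1 hI hv)).2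
    have hadj' : ∀ v ∈ I, ¬ G.Adj v u := fun v hv h => hadj v hv h.symm
    have hind : (∀ a ∈ insert u I, ∀ b ∈ insert u I, ¬ G.Adj a b) ↔
        ∀ a ∈ I, ∀ b ∈ I, ¬ G.Adj a b := by
      simp only [forall_mem_insert, G.irrefl, not_false_eq_true, true_and]
      exact ⟨fun h a ha => (h.2 a ha).2, fun h => ⟨hadj, fun a ha => ⟨hadj' a ha, h a ha⟩⟩⟩
    simp only [hind]
    split_ifs
    · rw [card_insert_of_notMem huI, prod_insert huI, pow_succ]
      ring
    · simp
  · intro I hIs hI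
    refine if_neg fun hind => hI (mem_powerset.2 fun v hv => mem_filter.2 ⟨mem_powerset.1 hIs hv,
      hind u (mem_insert_self u I) v (mem_insert_of_mem hv)⟩)

theorem occR_eq_div (p : V → ℝ) {S : Finset V} {u : V} (hu : u ∈ S)
    (hq : qbarR G p (S.erase u) ≠ 0) :
    occR G p S u = p u * qbarR G p {v ∈ S.erase u | ¬ G.Adj u v} / qbarR G p (S.erase u) := by
  have hS := qbarR_insert G p (notMem_erase u S)
  rw [insert_erase hu] at hS
  rw [occR, hS]
  field_simp
  ring

theorem occR_of_forall_not_adj (p : V → ℝ) {S : Finset V} {u : V} (hu : u ∈ S)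
    (hq : qbarR G p (S.erase u) ≠ 0) (hN : ∀ v ∈ S, ¬ G.Adj u v) :
    occR G p S u = p u := by
  rw [occR_eq_div G p hu hq, filter_true_of_mem fun v hv => hN v (mem_of_mem_erase hv),
    mul_div_assoc, div_self hq, mul_one]

theorem occR_eq_mul_inv (p : V → ℝ) {S : Finset V} {u w : V} (hu : u ∈ S) (huw : G.Adj u w)
    (hq : qbarR G p (S.erase u) ≠ 0) (hq' : qbarR G p ((S.erase u).erase w) ≠ 0) :
    occR G p S u = occR G p (S.erase w) u * (1 - occR G p (S.erase u) w)⁻¹ := by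
  have hu' : u ∈ S.erase w := mem_erase.2 ⟨huw.ne, hu⟩
  have herase : (S.erase w).erase u = (S.erase u).erase w := erase_right_comm
  have hN : {v ∈ (S.erase w).erase u | ¬ G.Adj u v} = {v ∈ S.erase u | ¬ G.Adj u v} := by
    ext v
    simp only [mem_filter, mem_erase]
    exact ⟨fun h => ⟨⟨h.1.1, h.1.2.2⟩, h.2⟩,
      fun h => ⟨⟨h.1.1, fun hvw => h.2 (hvw ▸ huw), h.1.2⟩, h.2⟩⟩
  rw [occR_eq_div G p hu hq, occR_eq_div G p hu' (herase ▸ hq'), hN, herase, occR, sub_sub_cancel]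
  field_simp

theorem occR_lt_one (p : V → ℝ) {S : Finset V} {u : V} (hS : 0 < qbarR G p S)
    (hS' : 0 < qbarR G p (S.erase u)) : occR G p S u < 1 := by
  rw [occR, sub_lt_self_iff]
  exact div_pos hS hS'

theorem occR_nonneg (p : V → ℝ) {S : Finset V} {u : V} (hu : u ∈ S) (hpu : 0 ≤ p u)
    (hq : 0 < qbarR G p (S.erase u)) (hN : 0 ≤ qbarR G p {v ∈ S.erase u | ¬ G.Adj u v}) :
    0 ≤ occR G p S u := by
  rw [occR_eq_div G p hu hq.ne']
  positivity

theorem occR_monotoneOn_convexOn {s : Set ℝ} (x : ℝ → V → ℝ) (hx₀ : ∀ t ∈ s, ∀ v, 0 ≤ x t v)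
    (hx_mono : ∀ v, MonotoneOn (x · v) s) (hx_conv : ∀ v, ConvexOn ℝ s (x · v))
    (hq : ∀ t ∈ s, ∀ T : Finset V, 0 < qbarR G (x t) T) (S : Finset V) :
    ∀ u ∈ S, MonotoneOn (fun t => occR G (x t) S u) s ∧
      ConvexOn ℝ s (fun t => occR G (x t) S u) := by
  induction S using Finset.strongInduction with
  | H S ih =>
  intro u hu
  by_cases hN : ∃ w ∈ S, G.Adj u w
  · obtain ⟨w, hw, huw⟩ := hN
    obtain ⟨mono₁, conv₁⟩ := ih (S.erase w) (erase_ssubset hw) u (mem_erase.2 ⟨huw.ne, hu⟩)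
    obtain ⟨mono₂, conv₂⟩ := ih (S.erase u) (erase_ssubset hu) w (mem_erase.2 ⟨huw.ne', hw⟩)
    have hlt : Set.MapsTo (fun t => occR G (x t) (S.erase u) w) s (Set.Iio 1) :=
      fun t ht => occR_lt_one G (x t) (hq t ht _) (hq t ht _)
    have mono₃ := monotoneOn_inv_one_sub.comp mono₂ hlt
    have conv₃ := convexOn_inv_one_sub.comp_of_mapsTo conv₂ monotoneOn_inv_one_sub hlt
    have nonneg₁ : ∀ t ∈ s, 0 ≤ occR G (x t) (S.erase w) u := fun t ht =>
      occR_nonneg G (x t) (mem_erase.2 ⟨huw.ne, hu⟩) (hx₀ t ht u) (hq t ht _) (hq t ht _).le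
    have nonneg₃ : ∀ t ∈ s, 0 ≤ (1 - occR G (x t) (S.erase u) w)⁻¹ := fun t ht =>
      inv_nonneg.2 (sub_nonneg.2 (hlt ht).le)
    have heq : Set.EqOn ((fun t => occR G (x t) (S.erase w) u) *
        ((fun y : ℝ => (1 - y)⁻¹) ∘ fun t => occR G (x t) (S.erase u) w))
        (fun t => occR G (x t) S u) s := fun t ht =>
      (occR_eq_mul_inv G (x t) hu huw (hq t ht _).ne' (hq t ht _).ne').symm
    exact ⟨(mono₁.mul mono₃ nonneg₁ nonneg₃).congr heq,
      (conv₁.mul conv₃ nonneg₁ nonneg₃ (mono₁.monovaryOn mono₃)).congr heq⟩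
  · push Not at hN
    have heq : Set.EqOn (x · u) (fun t => occR G (x t) S u) s := fun t ht =>
      (occR_of_forall_not_adj G (x t) hu (hq t ht _).ne' hN).symm
    exact ⟨(hx_mono u).congr heq, (hx_conv u).congr heq⟩

end

theorem stmt10_general {V : Type*} [DecidableEq V] (G : SimpleGraph V)
    [DecidableRel G.Adj] (p : V → ℂ) (t0 : ℝ)
    (hShearer : ∀ t ∈ Set.Icc (0 : ℝ) t0,
      ∀ S : Finset V, 0 < qbarR G (fun v => (1 + t) * ‖p v‖) S)
    (S : Finset V) (u : V) (hu : u ∈ S) :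
    MonotoneOn (fun t : ℝ => occR G (fun v => (1 + t) * ‖p v‖) S u)
        (Set.Icc 0 t0) ∧
    ConvexOn ℝ (Set.Icc (0 : ℝ) t0)
        (fun t : ℝ => occR G (fun v => (1 + t) * ‖p v‖) S u) := by
  refine occR_monotoneOn_convexOn G (fun t v => (1 + t) * ‖p v‖) ?_ ?_ ?_ hShearer S u hu
  · intro t ht v
    have : 0 ≤ 1 + t := by linarith [ht.1]
    positivity
  · intro v a _ b _ hab
    exact mul_le_mul_of_nonneg_right (by linarith) (norm_nonneg _)
  · intro v
    refine (((convexOn_id (convex_Icc 0 t0)).add_const 1).smul (norm_nonneg (p v))).congr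
      fun t _ => ?_
    simp only [smul_eq_mul, Pi.add_apply, id]
    ring

/-- if `p ∈ S` and `(1+t)p ∈ S` for all `t ∈ [0, t₀]`, then for every node
`(S,u)` the map `t ↦ ϱ_{S,u}((1+t)p)` is non-decreasing and convex on `[0, t₀]`
(equivalently, its derivative `β_{S,u}(p,t)` is non-negative and non-decreasing). -/
theorem stmt10 {V : Type*} [Fintype V] [DecidableEq V] (G : SimpleGraph V)
    [DecidableRel G.Adj] (p : V → ℂ) (t0 : ℝ) (ht0 : 0 < t0)
    (hShearer : ∀ t ∈ Set.Icc (0 : ℝ) t0,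
      ∀ S : Finset V, 0 < qbarR G (fun v => (1 + t) * ‖p v‖) S)
    (S : Finset V) (u : V) (hu : u ∈ S) :
    MonotoneOn (fun t : ℝ => occR G (fun v => (1 + t) * ‖p v‖) S u)
        (Set.Icc 0 t0) ∧
    ConvexOn ℝ (Set.Icc (0 : ℝ) t0)
        (fun t : ℝ => occR G (fun v => (1 + t) * ‖p v‖) S u) :=
  stmt10_general G p t0 hShearer S u hu
end

section
/- Let p be in the complex Shearer region and let (S,u) be a node of the computation tree with children C(S,u). Let R_c be any complex numbers with |R_c| ≤ ϱ_c for each child c, and R_{S,u} = p_u ∏_{c∈C(S,u)} (1 - R_c)^{-1}. Then |r_{S,u} - R_{S,u}| ≤ ϱ_{S,u} Σ_{c∈C(S,u)} |r_c - R_c|/(1 - ϱ_c). -/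
open Finset

/-- `ϱ_{S,u}(p) = r_{S,u}(|p|)` -/
noncomputable def rho {V : Type*} [DecidableEq V] (G : SimpleGraph V) [DecidableRel G.Adj]
    (p : V → ℂ) (S : Finset V) (u : V) : ℝ :=
  occR G (fun v => ‖p v‖) S u

/-- the multivariate independence polynomial `Z_G(z)` -/
noncomputable def ZG {V : Type*} [Fintype V] [DecidableEq V] (G : SimpleGraph V)
    [DecidableRel G.Adj] (z : V → ℂ) : ℂ :=
  ∑ I ∈ Finset.univ.powerset.filter (fun I => ∀ u ∈ I, ∀ v ∈ I, ¬ G.Adj u v),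
    ∏ v ∈ I, z v

/-!
Both `r = occ` and `ϱ = rho` satisfy the tree recurrence `r_{S,u} = p_u ∏_c (1 - r_c)⁻¹`,
obtained by telescoping the deletion recurrence `q(S) = q(S - u) - p_u q(S - u - N(u))` of the
alternating independence polynomial `q` along the children `c` of `(S,u)`. In the Shearer region
these polynomials do not vanish, and at the weights `|p|` they are even positive (intermediate
value theorem along `t|p|`, `0 ≤ t ≤ 1`), which gives `0 ≤ ϱ < 1` and, by induction on `S`,
`|r| ≤ ϱ`. The estimate is then a perturbation bound for `a ∏ (1 - x_c)⁻¹` on the polydisc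
`|x_c| ≤ ϱ_c`, on which each factor has modulus at most `(1 - ϱ_c)⁻¹`.
-/

lemma Finset.prod_div_sdiff_take {V K : Type*} [DecidableEq V] [CommGroupWithZero K]
    (f : Finset V → K) (l : List V) (A : Finset V) (hf : ∀ B ⊆ A, f B ≠ 0) :
    ∏ i : Fin l.length, f ((A \ (l.take i).toFinset).erase (l.get i)) / f (A \ (l.take i).toFinset)
      = f (A \ l.toFinset) / f A := by
  induction l generalizing A with
  | nil => simp [div_self (hf A subset_rfl)]
  | cons a l ih =>
    have hA : ∀ s : Finset V, A \ insert a s = A.erase a \ s := fun s => by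
      rw [sdiff_insert, erase_sdiff_comm]
    simp only [List.length_cons, Fin.prod_univ_succ, List.get_eq_getElem, Fin.val_zero,
      Fin.val_succ, List.take_zero, List.take_succ_cons, List.toFinset_nil, List.toFinset_cons,
      sdiff_empty, List.getElem_cons_zero, List.getElem_cons_succ, hA]
    have ih' := ih (A.erase a) fun B hB => hf B (hB.trans (erase_subset a A))
    simp only [List.get_eq_getElem] at ih'
    rw [ih', mul_comm, div_mul_div_cancel₀ (hf _ (erase_subset a A))]

lemma Finset.norm_prod_sub_prod_le {ι R : Type*} [NormedCommRing R] [NormOneClass R]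
    (s : Finset ι) {f g : ι → R} {M e : ι → ℝ} (hM : ∀ i ∈ s, 0 ≤ M i)
    (hf : ∀ i ∈ s, ‖f i‖ ≤ M i) (hg : ∀ i ∈ s, ‖g i‖ ≤ M i)
    (hfg : ∀ i ∈ s, ‖f i - g i‖ ≤ M i * e i) :
    ‖∏ i ∈ s, f i - ∏ i ∈ s, g i‖ ≤ (∏ i ∈ s, M i) * ∑ i ∈ s, e i := by
  classical
  induction s using Finset.induction_on with
  | empty => simp
  | insert a s ha ih =>
    simp only [Finset.forall_mem_insert] at hM hf hg hfg
    have hgs : ‖∏ i ∈ s, g i‖ ≤ ∏ i ∈ s, M i :=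
      (Finset.norm_prod_le s g).trans (Finset.prod_le_prod (fun _ _ => norm_nonneg _) hg.2)
    rw [Finset.prod_insert ha, Finset.prod_insert ha, Finset.prod_insert ha, Finset.sum_insert ha]
    calc ‖f a * ∏ i ∈ s, f i - g a * ∏ i ∈ s, g i‖
        = ‖f a * (∏ i ∈ s, f i - ∏ i ∈ s, g i) + (f a - g a) * ∏ i ∈ s, g i‖ := by ring_nf
      _ ≤ ‖f a‖ * ‖∏ i ∈ s, f i - ∏ i ∈ s, g i‖ + ‖f a - g a‖ * ‖∏ i ∈ s, g i‖ :=
        (norm_add_le _ _).trans (add_le_add (norm_mul_le _ _) (norm_mul_le _ _))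
      _ ≤ M a * ((∏ i ∈ s, M i) * ∑ i ∈ s, e i) + M a * e a * ∏ i ∈ s, M i :=
        add_le_add (mul_le_mul hf.1 (ih hM.2 hf.2 hg.2 hfg.2) (norm_nonneg _) hM.1)
          (mul_le_mul hfg.1 hgs (norm_nonneg _) ((norm_nonneg _).trans hfg.1))
      _ = M a * (∏ i ∈ s, M i) * (e a + ∑ i ∈ s, e i) := by ring

lemma norm_inv_one_sub_le {𝕜 : Type*} [NormedDivisionRing 𝕜] {x : 𝕜} {q : ℝ} (hx : ‖x‖ ≤ q)
    (hq : q < 1) : ‖(1 - x)⁻¹‖ ≤ (1 - q)⁻¹ := by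
  have h : 1 - q ≤ ‖1 - x‖ := by
    have := norm_sub_norm_le (1 : 𝕜) x
    rw [norm_one] at this
    linarith
  rw [norm_inv]
  exact inv_anti₀ (by linarith) h

lemma norm_mul_prod_inv_one_sub_sub_le {ι 𝕜 : Type*} [NormedField 𝕜] (s : Finset ι) (a : 𝕜)
    {r r' : ι → 𝕜} {q : ι → ℝ} (hq : ∀ i ∈ s, q i < 1) (hr : ∀ i ∈ s, ‖r i‖ ≤ q i)
    (hr' : ∀ i ∈ s, ‖r' i‖ ≤ q i) :
    ‖a * ∏ i ∈ s, (1 - r i)⁻¹ - a * ∏ i ∈ s, (1 - r' i)⁻¹‖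
      ≤ (‖a‖ * ∏ i ∈ s, (1 - q i)⁻¹) * ∑ i ∈ s, ‖r i - r' i‖ / (1 - q i) := by
  have hpos : ∀ i ∈ s, 0 < 1 - q i := fun i hi => sub_pos.mpr (hq i hi)
  have hne : ∀ {x : 𝕜} {i}, i ∈ s → ‖x‖ ≤ q i → 1 - x ≠ 0 := fun hi hx => by
    refine sub_ne_zero.mpr fun h => ?_
    rw [← h, norm_one] at hx
    linarith [hq _ hi]
  rw [← mul_sub, norm_mul, mul_assoc]
  gcongr
  refine s.norm_prod_sub_prod_le (fun i hi => (inv_pos.mpr (hpos i hi)).le)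
    (fun i hi => norm_inv_one_sub_le (hr i hi) (hq i hi))
    (fun i hi => norm_inv_one_sub_le (hr' i hi) (hq i hi)) fun i hi => ?_
  rw [inv_sub_inv' (hne hi (hr i hi)) (hne hi (hr' i hi)), sub_sub_sub_cancel_left, norm_mul,
    norm_mul, div_eq_mul_inv]
  calc ‖(1 - r i)⁻¹‖ * ‖r i - r' i‖ * ‖(1 - r' i)⁻¹‖
      = ‖r i - r' i‖ * (‖(1 - r i)⁻¹‖ * ‖(1 - r' i)⁻¹‖) := by ring
    _ ≤ ‖r i - r' i‖ * ((1 - q i)⁻¹ * (1 - q i)⁻¹) := by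
      gcongr
      exacts [(inv_pos.mpr (hpos i hi)).le, norm_inv_one_sub_le (hr i hi) (hq i hi),
        norm_inv_one_sub_le (hr' i hi) (hq i hi)]
    _ = (1 - q i)⁻¹ * (‖r i - r' i‖ * (1 - q i)⁻¹) := by ring

namespace SimpleGraph

section AltIndepPoly

variable {V : Type*} (G : SimpleGraph V)

lemma forall_mem_insert_not_adj_iff [DecidableEq V] {u : V} {I : Finset V} :
    (∀ a ∈ insert u I, ∀ b ∈ insert u I, ¬ G.Adj a b) ↔
      (∀ a ∈ I, ∀ b ∈ I, ¬ G.Adj a b) ∧ ∀ a ∈ I, ¬ G.Adj u a := by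
  simp only [Finset.mem_insert, forall_eq_or_imp, G.irrefl, not_false_eq_true, true_and]
  constructor
  · rintro ⟨hu, hI⟩
    exact ⟨fun a ha => (hI a ha).2, hu⟩
  · rintro ⟨hI, hu⟩
    exact ⟨hu, fun a ha => ⟨fun h => hu a ha h.symm, hI a ha⟩⟩

variable [DecidableRel G.Adj]

def indepFinsets (S : Finset V) : Finset (Finset V) :=
  S.powerset.filter (fun I => ∀ u ∈ I, ∀ v ∈ I, ¬ G.Adj u v)

/-- `qbar` and `qbarR` are the cases `K = ℂ` and `K = ℝ`. -/
def altIndepPoly (K : Type*) [CommRing K] (p : V → K) (S : Finset V) : K :=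
  ∑ I ∈ G.indepFinsets S, (-1 : K) ^ I.card * ∏ v ∈ I, p v

lemma altIndepPoly_zero (K : Type*) [CommRing K] (S : Finset V) :
    G.altIndepPoly K (fun _ => 0) S = 1 := by
  rw [altIndepPoly, Finset.sum_eq_single ∅]
  · simp
  · intro I _ hI
    obtain ⟨v, hv⟩ := Finset.nonempty_iff_ne_empty.mpr hI
    simp [Finset.prod_eq_zero hv]
  · simp [indepFinsets]

lemma map_altIndepPoly {K L : Type*} [CommRing K] [CommRing L] (f : K →+* L) (p : V → K)
    (S : Finset V) : f (G.altIndepPoly K p S) = G.altIndepPoly L (f ∘ p) S := by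
  simp [altIndepPoly, map_sum, map_prod]

lemma altIndepPoly_eq_ZG [Fintype V] [DecidableEq V] (p : V → ℂ) (S : Finset V) :
    G.altIndepPoly ℂ p S = ZG G (fun v => if v ∈ S then -p v else 0) := by
  rw [altIndepPoly, indepFinsets, ZG, ← Finset.sum_subset
    (Finset.filter_subset_filter _ (Finset.powerset_mono.mpr (Finset.subset_univ S)))]
  · -- `by congr`: the two filters differ in their decidability instances
    refine Finset.sum_congr (by congr) fun I hI => ?_
    have hIS : I ⊆ S := Finset.mem_powerset.mp (Finset.mem_filter.mp hI).1
    rw [Finset.prod_congr rfl fun v hv => if_pos (hIS hv), Finset.prod_neg]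
  · intro I hI hIS
    obtain ⟨v, hvI, hvS⟩ := Finset.not_subset.mp fun h =>
      hIS (Finset.mem_filter.mpr ⟨Finset.mem_powerset.mpr h, (Finset.mem_filter.mp hI).2⟩)
    exact Finset.prod_eq_zero hvI (if_neg hvS)

lemma altIndepPoly_eq_erase_sub [Fintype V] [DecidableEq V] {K : Type*} [CommRing K] (p : V → K)
    {S : Finset V} {u : V} (hu : u ∈ S) :
    G.altIndepPoly K p S = G.altIndepPoly K p (S.erase u)
      - p u * G.altIndepPoly K p ((S.erase u) \ G.neighborFinset u) := by
  set A := S.erase u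
  have huA : u ∉ A := Finset.notMem_erase u S
  have hfilter : G.indepFinsets (A \ G.neighborFinset u) =
      A.powerset.filter (fun I => (∀ a ∈ insert u I, ∀ b ∈ insert u I, ¬ G.Adj a b)) := by
    ext I
    simp only [indepFinsets, forall_mem_insert_not_adj_iff, Finset.mem_filter,
      Finset.mem_powerset, Finset.subset_sdiff, Finset.disjoint_left, mem_neighborFinset]
    tauto
  rw [altIndepPoly, altIndepPoly, altIndepPoly, hfilter, ← Finset.insert_erase hu, indepFinsets,
    indepFinsets, Finset.sum_filter, Finset.sum_filter, Finset.sum_powerset_insert huA,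
    Finset.sum_filter, Finset.mul_sum, sub_eq_add_neg, ← Finset.sum_neg_distrib]
  congr 1
  refine Finset.sum_congr rfl fun I hI => ?_
  have huI : u ∉ I := fun h => huA (Finset.mem_powerset.mp hI h)
  split_ifs <;> simp [Finset.card_insert_of_notMem huI, Finset.prod_insert huI, pow_succ]
  ring

def occRatio (K : Type*) [Field K] [DecidableEq V] (p : V → K) (S : Finset V) (u : V) : K :=
  1 - G.altIndepPoly K p S / G.altIndepPoly K p (S.erase u)

lemma occ_eq_occRatio [DecidableEq V] (p : V → ℂ) (S : Finset V) (u : V) :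
    occ G p S u = G.occRatio ℂ p S u :=
  rfl

lemma rho_eq_occRatio [DecidableEq V] (p : V → ℂ) (S : Finset V) (u : V) :
    rho G p S u = G.occRatio ℝ (‖p ·‖) S u :=
  rfl

lemma occRatio_eq_mul_prod [Fintype V] [DecidableEq V] {K : Type*} [Field K] (p : V → K)
    {S : Finset V} {u : V} (hu : u ∈ S) {l : List V} (hl : l.toFinset = S ∩ G.neighborFinset u)
    (hq : ∀ T ⊆ S, G.altIndepPoly K p T ≠ 0) :
    G.occRatio K p S u = p u * ∏ i : Fin l.length,
      (1 - G.occRatio K p ((S.erase u) \ (l.take i).toFinset) (l.get i))⁻¹ := by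
  have hq' : ∀ T ⊆ S.erase u, G.altIndepPoly K p T ≠ 0 :=
    fun T hT => hq T (hT.trans (Finset.erase_subset u S))
  have hsdiff : (S.erase u) \ l.toFinset = (S.erase u) \ G.neighborFinset u := by
    ext v
    simp only [hl, Finset.mem_sdiff, Finset.mem_erase, Finset.mem_inter]
    tauto
  simp only [occRatio, sub_sub_cancel, inv_div]
  rw [Finset.prod_div_sdiff_take _ l _ hq', hsdiff, G.altIndepPoly_eq_erase_sub p hu, sub_div,
    div_self (hq' _ subset_rfl), mul_div_assoc, sub_sub_cancel]

end AltIndepPoly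

section Shearer

variable {V : Type*} [Fintype V] [DecidableEq V] (G : SimpleGraph V) [DecidableRel G.Adj]

def IsShearer (p : V → ℂ) : Prop :=
  ∀ z : V → ℂ, (∀ v, ‖z v‖ ≤ ‖p v‖) → ZG G z ≠ 0

namespace IsShearer

variable {G} {p : V → ℂ}

lemma altIndepPoly_ne_zero (h : G.IsShearer p) {p' : V → ℂ} (hp' : ∀ v, ‖p' v‖ ≤ ‖p v‖)
    (S : Finset V) : G.altIndepPoly ℂ p' S ≠ 0 := by
  rw [altIndepPoly_eq_ZG]
  refine h _ fun v => ?_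
  split_ifs <;> simp [hp' v]

lemma altIndepPoly_norm_pos (h : G.IsShearer p) (S : Finset V) :
    0 < G.altIndepPoly ℝ (‖p ·‖) S := by
  set f : ℝ → ℝ := fun t => G.altIndepPoly ℝ (fun v => t * ‖p v‖) S
  have hcont : Continuous f := by
    simp only [f, altIndepPoly]
    fun_prop
  have hne : ∀ t ∈ Set.Icc (0 : ℝ) 1, f t ≠ 0 := by
    rintro t ⟨ht0, ht1⟩ hft
    refine h.altIndepPoly_ne_zero (p' := fun v => ((t * ‖p v‖ : ℝ) : ℂ)) (fun v => ?_) S ?_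
    · rw [Complex.norm_real, Real.norm_of_nonneg (by positivity)]
      exact mul_le_of_le_one_left (norm_nonneg _) ht1
    · have hmap := G.map_altIndepPoly Complex.ofRealHom (fun v => t * ‖p v‖) S
      rw [show G.altIndepPoly ℝ (fun v => t * ‖p v‖) S = 0 from hft, map_zero] at hmap
      exact hmap.symm
  have hf0 : f 0 = 1 := by simpa [f] using G.altIndepPoly_zero ℝ S
  by_contra! hf1
  obtain ⟨t, ht, hft⟩ := intermediate_value_Icc' zero_le_one hcont.continuousOn
    ⟨by simpa [f] using hf1, hf0 ▸ zero_le_one⟩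
  exact hne t ht hft

lemma occ_eq_mul_prod (h : G.IsShearer p) {S : Finset V} {u : V} (hu : u ∈ S) {l : List V}
    (hl : l.toFinset = S ∩ G.neighborFinset u) :
    occ G p S u = p u * ∏ i : Fin l.length,
      (1 - occ G p ((S.erase u) \ (l.take i).toFinset) (l.get i))⁻¹ :=
  G.occRatio_eq_mul_prod p hu hl fun T _ => h.altIndepPoly_ne_zero (fun _ => le_rfl) T

lemma rho_eq_mul_prod (h : G.IsShearer p) {S : Finset V} {u : V} (hu : u ∈ S) {l : List V}
    (hl : l.toFinset = S ∩ G.neighborFinset u) :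
    rho G p S u = ‖p u‖ * ∏ i : Fin l.length,
      (1 - rho G p ((S.erase u) \ (l.take i).toFinset) (l.get i))⁻¹ :=
  G.occRatio_eq_mul_prod _ hu hl fun T _ => (h.altIndepPoly_norm_pos T).ne'

lemma altIndepPoly_norm_le_erase (h : G.IsShearer p) (S : Finset V) (u : V) :
    G.altIndepPoly ℝ (‖p ·‖) S ≤ G.altIndepPoly ℝ (‖p ·‖) (S.erase u) := by
  by_cases hu : u ∈ S
  · rw [G.altIndepPoly_eq_erase_sub _ hu, sub_le_self_iff]
    exact mul_nonneg (norm_nonneg _) (h.altIndepPoly_norm_pos _).le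
  · rw [Finset.erase_eq_of_notMem hu]

lemma rho_nonneg (h : G.IsShearer p) (S : Finset V) (u : V) : 0 ≤ rho G p S u := by
  rw [rho_eq_occRatio, occRatio, sub_nonneg]
  exact div_le_one_of_le₀ (h.altIndepPoly_norm_le_erase S u) (h.altIndepPoly_norm_pos _).le

lemma rho_lt_one (h : G.IsShearer p) (S : Finset V) (u : V) : rho G p S u < 1 := by
  rw [rho_eq_occRatio, occRatio, sub_lt_self_iff]
  exact div_pos (h.altIndepPoly_norm_pos S) (h.altIndepPoly_norm_pos _)

lemma norm_occ_le_rho (h : G.IsShearer p) (S : Finset V) (u : V) :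
    ‖occ G p S u‖ ≤ rho G p S u := by
  induction S using Finset.strongInduction generalizing u with
  | H S ih =>
  by_cases hu : u ∈ S
  · have hl := Finset.toList_toFinset (S ∩ G.neighborFinset u)
    rw [h.occ_eq_mul_prod hu hl, h.rho_eq_mul_prod hu hl, norm_mul, norm_prod]
    gcongr with i
    refine norm_inv_one_sub_le (ih _ ?_ _) (h.rho_lt_one _ _)
    exact (Finset.sdiff_subset).trans_ssubset (Finset.erase_ssubset hu)
  · rw [occ_eq_occRatio, occRatio, Finset.erase_eq_of_notMem hu,
      div_self (h.altIndepPoly_ne_zero (fun _ => le_rfl) S), sub_self, norm_zero]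
    exact h.rho_nonneg S u

end IsShearer

end Shearer

end SimpleGraph

theorem stmt12_general {V : Type*} [Fintype V] [DecidableEq V] (G : SimpleGraph V)
    [DecidableRel G.Adj] (p : V → ℂ)
    (hShearer : ∀ z : V → ℂ, (∀ v, ‖z v‖ ≤ ‖p v‖) → ZG G z ≠ 0)
    (S : Finset V) (u : V) (hu : u ∈ S)
    (l : List V) (hl : l.toFinset = S ∩ G.neighborFinset u)
    (R : Fin l.length → ℂ)
    (hR : ∀ i : Fin l.length,
      ‖R i‖ ≤ rho G p ((S.erase u) \ (l.take i).toFinset) (l.get i))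
    (RSu : ℂ) (hRSu : RSu = p u * ∏ i : Fin l.length, (1 - R i)⁻¹) :
    ‖occ G p S u - RSu‖
      ≤ rho G p S u *
          ∑ i : Fin l.length,
            ‖occ G p ((S.erase u) \ (l.take i).toFinset) (l.get i) - R i‖
              / (1 - rho G p ((S.erase u) \ (l.take i).toFinset) (l.get i)) := by
  have h : G.IsShearer p := hShearer
  rw [h.occ_eq_mul_prod hu hl, hRSu, h.rho_eq_mul_prod hu hl]
  exact norm_mul_prod_inv_one_sub_sub_le _ (p u) (fun i _ => h.rho_lt_one _ _)
    (fun i _ => h.norm_occ_le_rho _ _) (fun i _ => hR i)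

/-- error propagation: let `p` lie in the complex Shearer region, let
`(S,u)` be a node of the computation tree whose children are given by an ordering `l`
of the neighbours of `u` in `S`, let `R_c` be complex numbers with `|R_c| ≤ ϱ_c`, and
let `R_{S,u} = p_u ∏_c (1 - R_c)⁻¹`.  Then
`|r_{S,u} - R_{S,u}| ≤ ϱ_{S,u} Σ_c |r_c - R_c|/(1 - ϱ_c)`. -/
theorem stmt12 {V : Type*} [Fintype V] [DecidableEq V] (G : SimpleGraph V)
    [DecidableRel G.Adj] (p : V → ℂ)
    (hShearer : ∀ z : V → ℂ, (∀ v, ‖z v‖ ≤ ‖p v‖) → ZG G z ≠ 0)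
    (S : Finset V) (u : V) (hu : u ∈ S)
    (l : List V) (hnodup : l.Nodup) (hl : l.toFinset = S ∩ G.neighborFinset u)
    (R : Fin l.length → ℂ)
    (hR : ∀ i : Fin l.length,
      ‖R i‖ ≤ rho G p ((S.erase u) \ (l.take i).toFinset) (l.get i))
    (RSu : ℂ) (hRSu : RSu = p u * ∏ i : Fin l.length, (1 - R i)⁻¹) :
    ‖occ G p S u - RSu‖
      ≤ rho G p S u *
          ∑ i : Fin l.length,
            ‖occ G p ((S.erase u) \ (l.take i).toFinset) (l.get i) - R i‖
              / (1 - rho G p ((S.erase u) \ (l.take i).toFinset) (l.get i)) :=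
  stmt12_general G p hShearer S u hu l hl R hR RSu hRSu
end

section
/- In the variable model, q̆_U(p(z)) is multilinear (affine in each coordinate) as a function of z ∈ [0,1]^m, for any U ⊆ V. Specifically: if each event E_i depends on coordinates A_i ⊆ [m], the dependency graph joins i,j when A_i ∩ A_j ≠ ∅, and p_i(z) = μ_z(E_i) is multilinear in z, then since the events depending on any fixed variable z_j form a clique in G, every monomial ∏_{i∈I} p_i over an independent set I contains at most one factor depending on z_j, and hence q̆_U(p(z)) = Σ_{I ⊆ U independent} (-1)^{|I|} ∏_{i∈I} p_i(z) is multilinear in z. -/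
open Finset

/-- probability of the event `E ⊆ {0,1}^m` under the product distribution `μ_z` -/
def pev {m : ℕ} (E : Finset (Fin m → Bool)) (z : Fin m → ℝ) : ℝ :=
  ∑ ω ∈ E, ∏ j, (if ω j then z j else 1 - z j)

/-- auxiliary product over all coordinates except `j` -/
def Praux {m : ℕ} (z : Fin m → ℝ) (j : Fin m) (ω : Fin m → Bool) : ℝ :=
  ∏ k ∈ Finset.univ.erase j, (if ω k then z k else 1 - z k)

lemma affSum {ι : Type*} (S : Finset ι) (f : ι → ℝ → ℝ)
    (h : ∀ i ∈ S, ∃ a b : ℝ, ∀ s, f i s = a + b * s) :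
    ∃ a b : ℝ, ∀ s, ∑ i ∈ S, f i s = a + b * s := by
  induction S using Finset.cons_induction with
  | empty => exact ⟨0, 0, by simp⟩
  | cons x S hx IH =>
    obtain ⟨a, b, hab⟩ := h x (mem_cons_self x S)
    obtain ⟨c, d, hcd⟩ := IH (fun i hi => h i (mem_cons_of_mem hi))
    exact ⟨a + c, b + d, fun s => by rw [Finset.sum_cons, hab, hcd]; ring⟩

lemma affProd {ι : Type*} (I : Finset ι) (a b : ι → ℝ)
    (h : ∀ i ∈ I, ∀ i' ∈ I, i ≠ i' → b i = 0 ∨ b i' = 0) :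
    ∃ c d : ℝ, ∀ s, ∏ i ∈ I, (a i + b i * s) = c + d * s := by
  induction I using Finset.cons_induction with
  | empty => exact ⟨1, 0, by simp⟩
  | cons x I hx IH =>
    by_cases hbx : b x = 0
    · obtain ⟨c, d, hcd⟩ := IH (fun i hi i' hi' =>
        h i (mem_cons_of_mem hi) i' (mem_cons_of_mem hi'))
      exact ⟨a x * c, a x * d, fun s => by rw [Finset.prod_cons, hcd, hbx]; ring⟩
    · have hb0 : ∀ i ∈ I, b i = 0 := fun i hi =>
        (h x (mem_cons_self x I) i (mem_cons_of_mem hi)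
          (fun e => hx (e ▸ hi))).resolve_left hbx
      refine ⟨a x * ∏ i ∈ I, a i, b x * ∏ i ∈ I, a i, fun s => ?_⟩
      have hp : ∏ i ∈ I, (a i + b i * s) = ∏ i ∈ I, a i :=
        Finset.prod_congr rfl (fun i hi => by rw [hb0 i hi]; ring)
      rw [Finset.prod_cons, hp]; ring

lemma pev_affine {m : ℕ} (E : Finset (Fin m → Bool)) (z : Fin m → ℝ) (j : Fin m) (s : ℝ) :
    pev E (Function.update z j s) =
      (∑ ω ∈ E, if ω j then 0 else Praux z j ω) +
      (∑ ω ∈ E, if ω j then Praux z j ω else -Praux z j ω) * s := by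
  unfold pev
  have key : ∀ ω : Fin m → Bool,
      (∏ k, (if ω k then Function.update z j s k else 1 - Function.update z j s k))
        = (if ω j then s else 1 - s) * Praux z j ω := by
    intro ω
    rw [← Finset.mul_prod_erase Finset.univ _ (Finset.mem_univ j)]
    unfold Praux
    congr 1
    · simp [Function.update_self]
    · refine Finset.prod_congr rfl fun k hk => ?_
      rw [Function.update_of_ne (Finset.ne_of_mem_erase hk)]
  calc ∑ ω ∈ E, ∏ k, (if ω k then Function.update z j s k else 1 - Function.update z j s k)
      = ∑ ω ∈ E, ((if ω j then 0 else Praux z j ω) +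
          (if ω j then Praux z j ω else -Praux z j ω) * s) := by
        refine Finset.sum_congr rfl fun ω _ => ?_
        rw [key ω]; cases ω j <;> simp <;> ring
    _ = _ := by rw [Finset.sum_add_distrib, ← Finset.sum_mul]

lemma b_zero {m : ℕ} (E : Finset (Fin m → Bool)) (A : Finset (Fin m))
    (hdep : ∀ ω ω' : Fin m → Bool, (∀ k ∈ A, ω k = ω' k) → (ω ∈ E ↔ ω' ∈ E))
    (z : Fin m → ℝ) (j : Fin m) (hj : j ∉ A) :
    ∑ ω ∈ E, (if ω j then Praux z j ω else -Praux z j ω) = 0 := by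
  have hP : ∀ ω : Fin m → Bool, ∀ c : Bool,
      Praux z j (Function.update ω j c) = Praux z j ω := by
    intro ω c
    unfold Praux
    refine Finset.prod_congr rfl fun k hk => ?_
    rw [Function.update_of_ne (Finset.ne_of_mem_erase hk)]
  refine Finset.sum_involution (fun ω _ => Function.update ω j (!ω j)) ?_ ?_ ?_ ?_
  · intro ω hω
    rw [hP]
    simp only [Function.update_self]
    cases ω j <;> simp
  · intro ω hω _ heq
    have := congrFun heq j
    simp [Function.update_self] at this
  · intro ω hω
    refine (hdep ω (Function.update ω j (!ω j)) fun k hk => ?_).mp hω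
    rw [Function.update_of_ne (show k ≠ j from fun e => hj (e ▸ hk))]
  · intro ω hω
    funext k
    by_cases hk : k = j
    · subst hk; simp
    · simp [Function.update_of_ne hk]

/-- multilinearity in the variable model: suppose each event
`E_i ⊆ {0,1}^m` depends only on the coordinates `A_i ⊆ [m]`, the dependency graph `G`
joins `i` and `j` exactly when `A_i ∩ A_j ≠ ∅`, and `p_i(z) = μ_z(E_i)`.  Then for
every `U ⊆ V`, `q̆_U(p(z))` is multilinear, i.e. affine in each coordinate `z_j`. -/
theorem stmt17 (n m : ℕ) (E : Fin n → Finset (Fin m → Bool)) (A : Fin n → Finset (Fin m))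
    (hdep : ∀ i, ∀ ω ω' : Fin m → Bool,
      (∀ j ∈ A i, ω j = ω' j) → (ω ∈ E i ↔ ω' ∈ E i))
    (G : SimpleGraph (Fin n)) [DecidableRel G.Adj]
    (hG : ∀ i j, G.Adj i j ↔ i ≠ j ∧ (A i ∩ A j).Nonempty) :
    ∀ (U : Finset (Fin n)) (z : Fin m → ℝ) (j : Fin m),
      ∃ a b : ℝ, ∀ s : ℝ,
        qbarR G (fun i => pev (E i) (Function.update z j s)) U = a + b * s := by
  intro U z j
  set a : Fin n → ℝ := fun i => ∑ ω ∈ E i, if ω j then 0 else Praux z j ω with ha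
  set b : Fin n → ℝ := fun i => ∑ ω ∈ E i, if ω j then Praux z j ω else -Praux z j ω with hbdef
  have hpev : ∀ i s, pev (E i) (Function.update z j s) = a i + b i * s :=
    fun i s => pev_affine (E i) z j s
  have hb : ∀ i, j ∉ A i → b i = 0 := fun i hi => b_zero (E i) (A i) (hdep i) z j hi
  have key : ∃ c d : ℝ, ∀ s : ℝ,
      ∑ I ∈ U.powerset.filter (fun I => ∀ u ∈ I, ∀ v ∈ I, ¬ G.Adj u v),
        ((-1 : ℝ) ^ I.card * ∏ i ∈ I, (a i + b i * s)) = c + d * s := by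
    apply affSum
    intro I hI
    simp only [mem_filter, mem_powerset] at hI
    obtain ⟨hIU, hInd⟩ := hI
    have hpair : ∀ i ∈ I, ∀ i' ∈ I, i ≠ i' → b i = 0 ∨ b i' = 0 := by
      intro i hi i' hi' hne
      by_contra hcon
      push_neg at hcon
      have h1 : j ∈ A i := by
        by_contra h; exact hcon.1 (hb i h)
      have h2 : j ∈ A i' := by
        by_contra h; exact hcon.2 (hb i' h)
      exact hInd i hi i' hi' ((hG i i').mpr ⟨hne, ⟨j, mem_inter.mpr ⟨h1, h2⟩⟩⟩)
    obtain ⟨c, d, hcd⟩ := affProd I a b hpair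
    exact ⟨(-1 : ℝ) ^ I.card * c, (-1 : ℝ) ^ I.card * d, fun s => by rw [hcd]; ring⟩
  obtain ⟨c, d, hcd⟩ := key
  refine ⟨c, d, fun s => ?_⟩
  rw [← hcd s]
  unfold qbarR
  refine Finset.sum_congr ?_ fun I _ => ?_
  · congr
  · rw [Finset.prod_congr rfl fun i _ => hpev i s]
end
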